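/- If a simple graph G on n vertices satisfies ω(G) = n/(n − \bar{\bar d}(G)), then G is regular of degree n(ω(G)−1)/ω(G) and G is a complete ω(G)-partite graph (complete multipartite with equal parts). -/

import Mathlib

open Finset

/-- A δ-set in a graph: every vertex in the set has degree at most `n - |S|`. -/
def IsDeltaSet {V : Type*} [Fintype V] (G : SimpleGraph V) [DecidableRel G.Adj]
    (S : Finset V) : Prop :=
  ∀ v ∈ S, G.degree v ≤ Fintype.card V - S.card

/-- The generalized chromatic number: the least `r` such that the vertex set
partitions into `r` δ-sets. -/
noncomputable def genChrom {V : Type*} [Fintype V] [DecidableEq V]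
    (G : SimpleGraph V) [DecidableRel G.Adj] : ℕ :=
  sInf {r | ∃ f : V → Fin r, ∀ i, IsDeltaSet G (Finset.univ.filter fun v => f v = i)}

/-- Quadratic mean of the degree sequence. -/
noncomputable def qmDeg {V : Type*} [Fintype V] (G : SimpleGraph V) [DecidableRel G.Adj] : ℝ :=
  Real.sqrt ((∑ v, (G.degree v : ℝ) ^ 2) / Fintype.card V)

/-- `k`-th elementary symmetric polynomial of `x : Fin r → ℝ`. -/
def esym {r : ℕ} (k : ℕ) (x : Fin r → ℝ) : ℝ :=
  ∑ t ∈ Finset.univ.powersetCard k, ∏ i ∈ t, x i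

/-!
Splitting off, again and again, the non-neighbours of a vertex of maximum degree partitions a
`K_{ω+1}`-free graph into `ω` parts `P i` with `d v ≤ n - #P i` on `P i`. Hence
`∑ d v ^ 2 ≤ ∑ #P i * (n - #P i) ^ 2 ≤ n * (n - n / ω) ^ 2`, the last step by comparing
`s ↦ s * (n - s) ^ 2` with its tangent line at `n / ω`. The hypothesis makes this chain an
equality, which forces all parts to have size `n / ω` and all degrees to equal `n - n / ω`.
By Cauchy–Schwarz the same chain bounds `2 e(H)` by `n * (n - n / ω)` for every
`K_{ω+1}`-free `H`, so `G` is Turán-maximal, hence isomorphic to the Turán graph.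
-/

section TangentLine

variable {ι : Type*} [Fintype ι] {s : ι → ℝ} {n : ℝ}

/-- Each summand on the left is the gap between `s ↦ s * (n - s) ^ 2` and its tangent line at
`t = n / card ι`; the tangent-line terms add up to `n * (n - t) ^ 2` since
`∑ i, s i = card ι * t`. -/
lemma sum_sub_div_card_sq_mul_eq (hι : Fintype.card ι ≠ 0) (hsum : ∑ i, s i = n) :
    ∑ i, (s i - n / Fintype.card ι) ^ 2 * (2 * n - 2 * (n / Fintype.card ι) - s i) =
      n * (n - n / Fintype.card ι) ^ 2 - ∑ i, s i * (n - s i) ^ 2 := by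
  set t := n / Fintype.card ι
  have hkt : (Fintype.card ι : ℝ) * t = n := mul_div_cancel₀ n (Nat.cast_ne_zero.2 hι)
  have hterm : ∀ i, (s i - t) ^ 2 * (2 * n - 2 * t - s i) =
      t * (n - t) ^ 2 + (n ^ 2 - 4 * n * t + 3 * t ^ 2) * s i
        - (n ^ 2 - 4 * n * t + 3 * t ^ 2) * t - s i * (n - s i) ^ 2 := fun i => by ring
  simp only [hterm, sum_sub_distrib, sum_add_distrib, ← mul_sum, sum_const, card_univ,
    nsmul_eq_mul, hsum]
  linear_combination ((n - t) ^ 2 - (n ^ 2 - 4 * n * t + 3 * t ^ 2)) * hkt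

lemma le_of_sum_eq_of_nonneg (hs : ∀ i, 0 ≤ s i) (hsum : ∑ i, s i = n) (i : ι) : s i ≤ n :=
  hsum ▸ single_le_sum (fun j _ => hs j) (mem_univ i)

lemma eq_div_card_of_subsingleton [Subsingleton ι] (hsum : ∑ i, s i = n) (i : ι) :
    s i = n / Fintype.card ι := by
  have : Unique ι := uniqueOfSubsingleton i
  rw [Fintype.card_unique, Nat.cast_one, div_one, ← hsum, Fintype.sum_unique,
    Subsingleton.elim i default]

lemma two_mul_div_card_le [Nontrivial ι] (hn : 0 ≤ n) : 2 * (n / Fintype.card ι) ≤ n := by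
  have hk : (2 : ℝ) ≤ Fintype.card ι := by exact_mod_cast Fintype.one_lt_card
  rw [mul_div_assoc', div_le_iff₀ (by linarith)]
  nlinarith

lemma sub_div_card_sq_mul_nonneg (hs : ∀ i, 0 ≤ s i) (hsum : ∑ i, s i = n) (i : ι) :
    0 ≤ (s i - n / Fintype.card ι) ^ 2 * (2 * n - 2 * (n / Fintype.card ι) - s i) := by
  rcases subsingleton_or_nontrivial ι with _ | _
  · simp [eq_div_card_of_subsingleton hsum i]
  · have := two_mul_div_card_le (ι := ι) (hsum ▸ sum_nonneg fun j _ => hs j)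
    have := le_of_sum_eq_of_nonneg hs hsum i
    exact mul_nonneg (sq_nonneg _) (by linarith)

theorem sum_mul_sub_sq_le (hs : ∀ i, 0 ≤ s i) (hsum : ∑ i, s i = n) :
    ∑ i, s i * (n - s i) ^ 2 ≤ n * (n - n / Fintype.card ι) ^ 2 := by
  cases isEmpty_or_nonempty ι
  · simp [← hsum]
  have := sum_sub_div_card_sq_mul_eq Fintype.card_ne_zero hsum
  have := sum_nonneg fun i (_ : i ∈ univ) => sub_div_card_sq_mul_nonneg hs hsum i
  linarith

theorem eq_div_card_of_sum_mul_sub_sq_eq (hs : ∀ i, 0 ≤ s i) (hsum : ∑ i, s i = n)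
    (heq : ∑ i, s i * (n - s i) ^ 2 = n * (n - n / Fintype.card ι) ^ 2) (i : ι) :
    s i = n / Fintype.card ι := by
  rcases subsingleton_or_nontrivial ι with _ | _
  · exact eq_div_card_of_subsingleton hsum i
  set t := n / Fintype.card ι
  have hzero : ∀ j, (s j - t) ^ 2 * (2 * n - 2 * t - s j) = 0 := by
    have := sum_sub_div_card_sq_mul_eq Fintype.card_ne_zero hsum
    have := (sum_eq_zero_iff_of_nonneg fun j (_ : j ∈ univ) =>
      sub_div_card_sq_mul_nonneg hs hsum j).1 (by linarith)
    exact fun j => this j (mem_univ j)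
  rcases mul_eq_zero.1 (hzero i) with h | h
  · linarith [pow_eq_zero_iff (n := 2) two_ne_zero |>.1 h]
  -- The tangent line also touches `s ↦ s (n - s)²` at `s = 2n - 2t`, which lies in `[0, n]`
  -- only when `n = 2t` and `s = n`; then every other part is empty, forcing `t = 0`.
  obtain ⟨j, hji⟩ := exists_ne i
  have h2t := two_mul_div_card_le (ι := ι) (hsum ▸ sum_nonneg fun j _ => hs j)
  have hsi := le_of_sum_eq_of_nonneg hs hsum i
  have hij := hsum ▸
    add_le_sum (fun k (_ : k ∈ univ) => hs k) (mem_univ i) (mem_univ j) hji.symm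
  have hsj : s j = 0 := le_antisymm (by linarith) (hs j)
  have hj := hzero j
  rw [hsj] at hj
  have hn : n = 2 * t := by linarith
  have ht : t ^ 3 = 0 := by linear_combination (1 / 2) * hj - t ^ 2 * hn
  linarith [pow_eq_zero_iff (n := 3) three_ne_zero |>.1 ht]

end TangentLine

section Fiber

variable {V ι : Type*} [Fintype V] [Fintype ι] [DecidableEq ι] (f : V → ι)

lemma sum_sq_sub_card_fiber (n : ℝ) :
    ∑ v, (n - #{w | f w = f v}) ^ 2 =
      ∑ i, (#{w | f w = i} : ℝ) * (n - #{w | f w = i}) ^ 2 := by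
  rw [← sum_fiberwise univ f]
  refine sum_congr rfl fun i _ => ?_
  rw [sum_congr rfl fun v hv => by rw [(mem_filter.1 hv).2], sum_const, nsmul_eq_mul]

lemma sum_card_fiber : ∑ i, (#{w | f w = i} : ℝ) = Fintype.card V := by
  rw [← Nat.cast_sum, ← card_eq_sum_card_fiberwise fun v _ => mem_univ (f v), card_univ]

end Fiber

lemma Nat.eq_div_and_eq_mul_pred_div_of_add_eq {n d m k : ℕ} (hk : 0 < k) (hdm : d + m = n)
    (hd : (d : ℝ) = n - n / k) : m = n / k ∧ d = n * (k - 1) / k := by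
  have hkm : n = k * m := by
    have hk' : (k : ℝ) ≠ 0 := by positivity
    have : (n : ℝ) = k * m := by
      rw [← hdm] at hd ⊢; push_cast at hd ⊢; field_simp at hd; linarith
    exact_mod_cast this
  obtain ⟨j, rfl⟩ : ∃ j, k = j + 1 := ⟨k - 1, by omega⟩
  subst hkm
  refine ⟨(Nat.mul_div_cancel_left _ hk).symm, ?_⟩
  rw [Nat.add_sub_cancel, show (j + 1) * m * j = (j + 1) * (m * j) by ring,
    Nat.mul_div_cancel_left _ hk]
  linarith

namespace SimpleGraph

variable {V : Type*} [Fintype V] (G : SimpleGraph V)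

lemma cliqueFree_cliqueNum_succ : G.CliqueFree (G.cliqueNum + 1) := fun t ht => by
  have := ht.isClique.card_le_cliqueNum
  rw [ht.card_eq] at this
  omega

lemma cliqueNum_pos [Nonempty V] : 0 < G.cliqueNum :=
  have v : V := Classical.arbitrary V
  (isNClique_singleton.2 rfl : G.IsNClique 1 {v}).isClique.card_le_cliqueNum

lemma cliqueNum_le_card : G.cliqueNum ≤ Fintype.card V := by
  obtain ⟨s, hs⟩ := G.exists_isNClique_cliqueNum
  exact hs.card_eq ▸ card_le_univ s

lemma degree_add_card_fiber_eq [DecidableRel G.Adj] {ι : Type*} [DecidableEq ι] {f : V → ι}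
    (hf : ∀ u v, G.Adj u v ↔ f u ≠ f v) (v : V) :
    G.degree v + #{w | f w = f v} = Fintype.card V := by
  rw [← card_neighborFinset_eq_degree, neighborFinset_eq_filter, add_comm]
  simp_rw [hf, ne_comm (a := f v)]
  exact card_filter_add_card_filter_not _

variable [DecidableRel G.Adj]

lemma sum_degree_sq_eq_card_mul_qmDeg_sq :
    ∑ v, (G.degree v : ℝ) ^ 2 = Fintype.card V * qmDeg G ^ 2 := by
  rw [qmDeg, Real.sq_sqrt (by positivity)]
  rcases isEmpty_or_nonempty V with _ | _
  · simp
  · exact (mul_div_cancel₀ _ (by positivity)).symm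

lemma degree_le_card_sub_card_fiber {ι : Type*} [DecidableEq ι] {f : V → ι}
    (hf : ∀ i, IsDeltaSet G {v | f v = i}) (v : V) :
    (G.degree v : ℝ) ≤ Fintype.card V - #{w | f w = f v} := by
  have := hf (f v) v (mem_filter.2 ⟨mem_univ v, rfl⟩)
  have := card_le_univ {w | f w = f v}
  rw [← Nat.cast_sub this]
  exact_mod_cast ‹_›

variable [DecidableEq V]

theorem exists_degree_add_card_fiber_le (k : ℕ) (R : Finset V)
    (hR : ∀ s ⊆ R, ¬G.IsNClique (k + 1) s) :
    ∃ f : V → ℕ, (∀ v ∈ R, f v < k) ∧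
      ∀ v ∈ R, G.degree v + #{w ∈ R | f w = f v} ≤ Fintype.card V := by
  induction k generalizing R with
  | zero =>
    have hR : R = ∅ := eq_empty_of_forall_notMem fun v hv =>
      hR {v} (singleton_subset_iff.2 hv) (isNClique_singleton.2 rfl)
    simp [hR]
  | succ k ih =>
    rcases R.eq_empty_or_nonempty with rfl | hne
    · simp
    obtain ⟨x, hxR, hxmax⟩ := exists_max_image R (fun v => G.degree v) hne
    obtain ⟨g, hg_lt, hg_deg⟩ := ih {w ∈ R | G.Adj x w} fun s hs hclique =>
      hR (insert x s) (insert_subset hxR fun w hw => (mem_filter.1 (hs hw)).1)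
        (hclique.insert fun w hw => (mem_filter.1 (hs hw)).2)
    refine ⟨fun v => if G.Adj x v then g v + 1 else 0, fun v hv => ?_, fun v hv => ?_⟩
    · dsimp only
      split_ifs with hxv
      · exact Nat.succ_lt_succ (hg_lt v (mem_filter.2 ⟨hv, hxv⟩))
      · exact Nat.succ_pos k
    dsimp only
    by_cases hxv : G.Adj x v
    · convert hg_deg v (mem_filter.2 ⟨hv, hxv⟩) using 3
      ext w
      by_cases hxw : G.Adj x w <;> simp [hxv, hxw]
    · simp only [hxv, if_false]
      have hfib : {w ∈ R | (if G.Adj x w then g w + 1 else 0) = 0} ⊆ (G.neighborFinset x)ᶜ :=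
        fun w hw => by by_cases hxw : G.Adj x w <;> simp_all
      have := card_le_card hfib
      rw [card_compl, card_neighborFinset_eq_degree] at this
      have := hxmax v hv
      have := G.degree_lt_card_verts x
      omega

theorem exists_isDeltaSet_partition (k : ℕ) (h : G.CliqueFree (k + 1)) :
    ∃ f : V → Fin k, ∀ i, IsDeltaSet G {v | f v = i} := by
  obtain ⟨f, hf_lt, hf_deg⟩ := G.exists_degree_add_card_fiber_le k univ fun s _ => h s
  refine ⟨fun v => ⟨f v, hf_lt v (mem_univ v)⟩, fun i v hv => ?_⟩
  obtain rfl : (⟨f v, _⟩ : Fin k) = i := (mem_filter.1 hv).2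
  have := hf_deg v (mem_univ v)
  simp only [Fin.mk.injEq]
  omega

/-- With `q = qmDeg G` this reads `q ≤ n - n / k`, i.e. `k ≥ n / (n - q)`. -/
theorem sum_degree_sq_le {k : ℕ} (h : G.CliqueFree (k + 1)) :
    ∑ v, (G.degree v : ℝ) ^ 2 ≤
      Fintype.card V * (Fintype.card V - Fintype.card V / k) ^ 2 := by
  obtain ⟨f, hf⟩ := G.exists_isDeltaSet_partition k h
  calc ∑ v, (G.degree v : ℝ) ^ 2
      ≤ ∑ v, ((Fintype.card V : ℝ) - #{w | f w = f v}) ^ 2 :=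
        sum_le_sum fun v _ => pow_le_pow_left₀ (Nat.cast_nonneg _)
          (G.degree_le_card_sub_card_fiber hf v) 2
    _ = ∑ i, (#{w | f w = i} : ℝ) * (Fintype.card V - #{w | f w = i}) ^ 2 :=
        sum_sq_sub_card_fiber f _
    _ ≤ _ := by
        simpa using sum_mul_sub_sq_le (fun i => Nat.cast_nonneg _) (sum_card_fiber f)

theorem degree_eq_of_sum_degree_sq_eq {k : ℕ} (h : G.CliqueFree (k + 1))
    (heq : ∑ v, (G.degree v : ℝ) ^ 2 =
      Fintype.card V * (Fintype.card V - Fintype.card V / k) ^ 2) (v : V) :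
    (G.degree v : ℝ) = Fintype.card V - Fintype.card V / k := by
  obtain ⟨f, hf⟩ := G.exists_isDeltaSet_partition k h
  have hle : ∀ v, (G.degree v : ℝ) ^ 2 ≤ ((Fintype.card V : ℝ) - #{w | f w = f v}) ^ 2 :=
    fun v => pow_le_pow_left₀ (Nat.cast_nonneg _) (G.degree_le_card_sub_card_fiber hf v) 2
  have hparts := sum_mul_sub_sq_le (fun i => Nat.cast_nonneg _) (sum_card_fiber f)
  rw [← sum_sq_sub_card_fiber, Fintype.card_fin] at hparts
  have hsum_le := sum_le_sum fun v (_ : v ∈ univ) => hle v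
  have hfiber := eq_div_card_of_sum_mul_sub_sq_eq (fun i => Nat.cast_nonneg _) (sum_card_fiber f)
    (by rw [← sum_sq_sub_card_fiber, Fintype.card_fin]; linarith) (f v)
  have hv := (sum_eq_sum_iff_of_le fun v _ => hle v).1 (by linarith) v (mem_univ v)
  have := G.degree_le_card_sub_card_fiber hf v
  have := Nat.cast_nonneg (α := ℝ) (G.degree v)
  rw [sq_eq_sq₀ (Nat.cast_nonneg _) (by linarith)] at hv
  rw [hv, hfiber, Fintype.card_fin]

theorem isTuranMaximal_of_degree_eq {k : ℕ} (h : G.CliqueFree (k + 1))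
    (hdeg : ∀ v, (G.degree v : ℝ) = Fintype.card V - Fintype.card V / k) :
    G.IsTuranMaximal k := by
  refine ⟨h, fun H _ hH => ?_⟩
  have hG : ∑ v, (G.degree v : ℝ) =
      Fintype.card V * (Fintype.card V - Fintype.card V / k) := by
    rw [sum_congr rfl fun v _ => hdeg v, sum_const, card_univ, nsmul_eq_mul]
  have hCS := sq_sum_le_card_mul_sum_sq (s := univ) (f := fun v => (H.degree v : ℝ))
  have hH := H.sum_degree_sq_le hH
  rw [card_univ] at hCS
  have : ∑ v, (H.degree v : ℝ) ≤ ∑ v, (G.degree v : ℝ) := by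
    refine (pow_le_pow_iff_left₀ (sum_nonneg fun v _ => Nat.cast_nonneg _)
      (sum_nonneg fun v _ => Nat.cast_nonneg _) two_ne_zero).1 ?_
    rw [hG]
    nlinarith [Nat.cast_nonneg (α := ℝ) (Fintype.card V)]
  rw [← Nat.cast_sum, ← Nat.cast_sum, sum_degrees_eq_twice_card_edges,
    sum_degrees_eq_twice_card_edges] at this
  exact_mod_cast (Nat.mul_le_mul_left_iff two_pos).1 (by exact_mod_cast this)

end SimpleGraph

theorem stmt12 {V : Type*} [Fintype V] [DecidableEq V] (G : SimpleGraph V) [DecidableRel G.Adj]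
    (hn : 0 < Fintype.card V)
    (heq : (G.cliqueNum : ℝ) = (Fintype.card V : ℝ) / ((Fintype.card V : ℝ) - qmDeg G)) :
    G.IsRegularOfDegree (Fintype.card V * (G.cliqueNum - 1) / G.cliqueNum) ∧
      ∃ f : V → Fin G.cliqueNum,
        (∀ u v, G.Adj u v ↔ f u ≠ f v) ∧
        ∀ i, (Finset.univ.filter fun v => f v = i).card =
          Fintype.card V / G.cliqueNum := by
  have : Nonempty V := Fintype.card_pos_iff.1 hn
  have hω := G.cliqueNum_pos
  have hq : qmDeg G = Fintype.card V - Fintype.card V / G.cliqueNum := by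
    have hne : (Fintype.card V : ℝ) - qmDeg G ≠ 0 := fun h0 => by
      rw [h0, div_zero, Nat.cast_eq_zero] at heq
      omega
    field_simp at heq ⊢
    linarith
  have hdeg := G.degree_eq_of_sum_degree_sq_eq G.cliqueFree_cliqueNum_succ
    (by rw [G.sum_degree_sq_eq_card_mul_qmDeg_sq, hq])
  obtain ⟨φ⟩ :=
    (G.isTuranMaximal_of_degree_eq G.cliqueFree_cliqueNum_succ hdeg).nonempty_iso_turanGraph
  let f : V → Fin G.cliqueNum := fun v => ⟨φ v % G.cliqueNum, Nat.mod_lt _ hω⟩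
  have hf : ∀ u v, G.Adj u v ↔ f u ≠ f v := fun u v => by
    rw [← φ.map_rel_iff, SimpleGraph.turanGraph_adj, ne_eq, ne_eq, Fin.mk.injEq]
  have hfiber v :=
    Nat.eq_div_and_eq_mul_pred_div_of_add_eq hω (G.degree_add_card_fiber_eq hf v) (hdeg v)
  refine ⟨fun v => (hfiber v).2, f, hf, fun i => ?_⟩
  have hfi : f (φ.symm ⟨i, i.2.trans_le G.cliqueNum_le_card⟩) = i :=
    Fin.ext (by simp [f, Nat.mod_eq_of_lt i.2])
  rw [← hfi]
  exact (hfiber _).1
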